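/- arXiv:2001.00181 — 2 statements merged into one kernel-verified Lean document; each statement's English description precedes it below -/
import Mathlib

section
/- For any finite simple graph G, the chromatic symmetric function satisfies X_G = Σ_π μ(π)^! · m_{μ(π)}, where the sum is over all stable partitions π of G, μ(π) is the type of π, μ^! = Π_i m_i! with m_i the multiplicity of the part i in μ, and m_μ is the monomial symmetric function indexed by μ. -/
open Finset MvPolynomial

/-- The chromatic symmetric function of `G`, realized in `N` variables. -/
noncomputable def csf {V : Type} [Fintype V] (G : SimpleGraph V) (N : ℕ) :
    MvPolynomial (Fin N) ℤ := by
  classical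
  exact ∑ κ ∈ Finset.univ.filter
      (fun κ : V → Fin N => ∀ u v : V, G.Adj u v → κ u ≠ κ v),
    ∏ v : V, X (κ v)

/-- A semistandard filling of the Young diagram `D` with entries in `Fin N`:
rows weakly increase (left to right) and columns strictly increase (top to bottom). -/
def IsSSYTof (D : YoungDiagram) (N : ℕ) (T : D.cells → Fin N) : Prop :=
  (∀ c d : D.cells, (c : ℕ × ℕ).1 = (d : ℕ × ℕ).1 → (c : ℕ × ℕ).2 ≤ (d : ℕ × ℕ).2 →
      T c ≤ T d) ∧
  (∀ c d : D.cells, (c : ℕ × ℕ).2 = (d : ℕ × ℕ).2 → (c : ℕ × ℕ).1 < (d : ℕ × ℕ).1 →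
      T c < T d)

/-- The Schur polynomial of shape `D` in `N` variables, as the sum of content
monomials over all semistandard Young tableaux of shape `D` with entries in `Fin N`. -/
noncomputable def schurShape (N : ℕ) (D : YoungDiagram) : MvPolynomial (Fin N) ℤ := by
  classical
  exact ∑ T ∈ Finset.univ.filter (fun T : D.cells → Fin N => IsSSYTof D N T),
    ∏ c : D.cells, X (T c)

/-- The Young diagram of a partition. -/
def diagramOf {n : ℕ} (μ : n.Partition) : YoungDiagram :=
  YoungDiagram.ofRowLens (μ.parts.sort (· ≥ ·)) (μ.parts.pairwise_sort (· ≥ ·)).sortedGE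

/-- The Schur polynomial `s_μ` in `N` variables. -/
noncomputable def schur (N : ℕ) {n : ℕ} (μ : n.Partition) : MvPolynomial (Fin N) ℤ :=
  schurShape N (diagramOf μ)

/-- A graph is Schur positive if its chromatic symmetric function, realized in any
number `N ≥ |V(G)|` of variables, is a nonnegative linear combination of the Schur
polynomials `s_λ`, `λ ⊢ |V(G)|`. -/
def SchurPositive {V : Type} [Fintype V] (G : SimpleGraph V) : Prop :=
  ∀ N : ℕ, Fintype.card V ≤ N →
    ∃ c : (Fintype.card V).Partition → ℤ,
      (∀ μ, 0 ≤ c μ) ∧ csf G N = ∑ μ, c μ • schur N μ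

/-- A graph is e-positive if its chromatic symmetric function, realized in any
number `N ≥ |V(G)|` of variables, is a nonnegative linear combination of the
polynomials `e_λ`, `λ ⊢ |V(G)|`. -/
def EPositive {V : Type} [Fintype V] (G : SimpleGraph V) : Prop :=
  ∀ N : ℕ, Fintype.card V ≤ N →
    ∃ c : (Fintype.card V).Partition → ℤ,
      (∀ μ, 0 ≤ c μ) ∧ csf G N = ∑ μ, c μ • esymmPart (Fin N) ℤ μ

/-- A stable (independent) set of vertices. -/
def IsStableSet {V : Type} (G : SimpleGraph V) (b : Finset V) : Prop :=
  ∀ u ∈ b, ∀ v ∈ b, ¬ G.Adj u v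

/-- A stable partition of `G`: a set partition of the vertex set all of whose
blocks are stable. -/
def IsStablePartition {V : Type} [Fintype V] [DecidableEq V] (G : SimpleGraph V)
    (P : Finpartition (Finset.univ : Finset V)) : Prop :=
  ∀ b ∈ P.parts, IsStableSet G b

/-- The type of a set partition: the multiset of its block sizes. -/
def typeOf {V : Type} [Fintype V] [DecidableEq V]
    (P : Finpartition (Finset.univ : Finset V)) : Multiset ℕ :=
  P.parts.val.map Finset.card
/-- `μ^!`: the product of the factorials of the multiplicities of the parts of `μ`. -/
def multFact (m : Multiset ℕ) : ℕ :=
  m.toFinset.prod fun i => Nat.factorial (m.count i)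

/-- The monomial symmetric polynomial `m_μ` in `N` variables: the sum of all
distinct monomials whose multiset of (nonzero) exponents equals `μ`. -/
noncomputable def mSym (N : ℕ) (μ : Multiset ℕ) : MvPolynomial (Fin N) ℤ := by
  classical
  exact ∑ f ∈ Finset.univ.filter
      (fun f : Fin N → Fin (μ.sum + 1) =>
        ((Finset.univ.val.map fun i : Fin N => (f i : ℕ)).filter fun k => k ≠ 0) = μ),
    ∏ i : Fin N, X i ^ (f i : ℕ)

/-!
Group the proper colorings `κ : V → Fin N` by their partition into fibers, which is stable
exactly when `κ` is proper. The colorings with fiber partition `P` are the injections `g` of the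
blocks of `P` into the colors, with monomial `∏_b x_{g b}^{|b|}`; its exponent vector is a
rearrangement of the type `μ` of `P`. Two injections with the same exponent vector differ by a
size-preserving permutation of the blocks, so each monomial of `m_μ` arises `μ^!` times.
-/

section WeightPreserving

variable {α β : Type*} [Fintype α] [Fintype β]

theorem count_map_univ {γ : Type*} [DecidableEq γ] (w : α → γ) (c : γ) :
    (univ.val.map w).count c = Fintype.card {a // w a = c} := by
  rw [Multiset.count_map, Fintype.card_subtype, card_def, filter_val]
  simp only [eq_comm]

theorem exists_equiv_comp_eq_of_map_eq {γ : Type*} [DecidableEq γ] {w₁ : α → γ} {w₂ : β → γ}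
    (h : univ.val.map w₁ = univ.val.map w₂) : ∃ e : α ≃ β, ∀ a, w₂ (e a) = w₁ a := by
  have hcard (c : γ) : Fintype.card {a // w₁ a = c} = Fintype.card {b // w₂ b = c} := by
    rw [← count_map_univ, ← count_map_univ, h]
  exact ⟨Equiv.ofFiberEquiv fun c => Fintype.equivOfCardEq (hcard c), Equiv.ofFiberEquiv_map _⟩

theorem card_equiv_comp_eq [DecidableEq α] [DecidableEq β] (w₁ : α → ℕ) (w₂ : β → ℕ)
    (h : univ.val.map w₁ = univ.val.map w₂) :
    Fintype.card {e : α ≃ β // ∀ a, w₂ (e a) = w₁ a} = multFact (univ.val.map w₁) := by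
  obtain ⟨e₀, he₀⟩ := exists_equiv_comp_eq_of_map_eq h
  -- composing with `e₀⁻¹` turns these bijections into the permutations of `α` preserving `w₁`
  have hperm : {e : α ≃ β // ∀ a, w₂ (e a) = w₁ a} ≃ {σ : Equiv.Perm α // w₁ ∘ σ = w₁} :=
    (Equiv.refl α).equivCongr e₀.symm |>.subtypeEquiv fun e => by
      simp [funext_iff, ← he₀]
  rw [Fintype.card_congr hperm, DomMulAct.stabilizer_card', multFact]
  exact prod_congr rfl fun c _ => by rw [count_map_univ]

theorem card_embedding_comp_eq [DecidableEq α] [DecidableEq β] (w₁ : α → ℕ) (w₂ : β → ℕ)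
    (hw₁ : ∀ a, w₁ a ≠ 0) (h : (univ.val.map w₂).filter (· ≠ 0) = univ.val.map w₁) :
    Fintype.card {g : α ↪ β // ∀ a, w₂ (g a) = w₁ a} = multFact (univ.val.map w₁) := by
  -- `g` lands in the support `β'` of `w₂`, which has as many elements as `α`
  let β' := {b // w₂ b ≠ 0}
  have hmap : univ.val.map w₁ = univ.val.map fun b : β' => w₂ b := by
    rw [← h, Multiset.filter_map, ← filter_val]
    exact (univ_val_map_subtype_restrict w₂ _).symm
  have hcard : Fintype.card α = Fintype.card β' := by
    simpa using congrArg Multiset.card hmap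
  rw [← card_equiv_comp_eq w₁ (fun b : β' => w₂ b) hmap]
  refine Fintype.card_congr
    { toFun := fun g => ⟨Equiv.ofBijective (fun a => ⟨g.1 a, by rw [g.2 a]; exact hw₁ a⟩)
          ((Fintype.bijective_iff_injective_and_card _).2
            ⟨fun a b hab => g.1.injective (congrArg Subtype.val hab), hcard⟩), g.2⟩
      invFun := fun e => ⟨e.1.toEmbedding.trans (Function.Embedding.subtype _), e.2⟩
      left_inv := fun g => rfl
      right_inv := fun e => Subtype.ext (Equiv.ext fun a => rfl) }

end WeightPreserving

section FiberSum

variable {ι κ : Type*} [Fintype ι] [DecidableEq κ] (w : ι → ℕ)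

def fiberSum (g : ι → κ) (j : κ) : ℕ := ∑ i with g i = j, w i

theorem fiberSum_apply_of_injective {g : ι → κ} (hg : Function.Injective g) (i : ι) :
    fiberSum w g (g i) = w i := by
  exact sum_eq_single_of_mem i (by simp) fun i' hi' hne => absurd (hg (mem_filter.1 hi').2) hne

theorem fiberSum_eq_zero_of_notMem_range {g : ι → κ} {j : κ} (hj : j ∉ Set.range g) :
    fiberSum w g j = 0 :=
  sum_eq_zero fun i hi => absurd ⟨i, (mem_filter.1 hi).2⟩ hj

theorem fiberSum_le_sum (g : ι → κ) (j : κ) : fiberSum w g j ≤ (univ.val.map w).sum := by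
  rw [sum_map_val]
  exact sum_le_sum_of_subset (filter_subset _ _)

theorem prod_pow_eq_prod_pow_fiberSum [Fintype κ] {M : Type*} [CommMonoid M] (x : κ → M)
    (g : ι → κ) : ∏ i, x (g i) ^ w i = ∏ j, x j ^ fiberSum w g j := by
  rw [← prod_fiberwise univ g]
  refine prod_congr rfl fun j _ => ?_
  rw [fiberSum, ← prod_pow_eq_pow_sum]
  exact prod_congr rfl fun i hi => by rw [(mem_filter.1 hi).2]

variable [Fintype κ] {w}

theorem filter_map_fiberSum (hw : ∀ i, w i ≠ 0) {g : ι → κ} (hg : Function.Injective g) :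
    (univ.val.map (fiberSum w g)).filter (· ≠ 0) = univ.val.map w := by
  have hsupp : univ.filter (fun j => fiberSum w g j ≠ 0) = univ.map ⟨g, hg⟩ := by
    ext j
    simp only [mem_filter, mem_univ, true_and, mem_map, Function.Embedding.coeFn_mk]
    constructor
    · intro hj
      by_contra hr
      exact hj (fiberSum_eq_zero_of_notMem_range w hr)
    · rintro ⟨i, rfl⟩
      rw [fiberSum_apply_of_injective w hg]
      exact hw i
  simp only [Multiset.filter_map, ← filter_val, Function.comp_def, hsupp, map_val,
    Multiset.map_map]
  exact Multiset.map_congr rfl fun i _ => fiberSum_apply_of_injective w hg i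

theorem eq_zero_of_filter_map_eq {g : ι → κ} (hg : Function.Injective g) {f : κ → ℕ}
    (hf : (univ.val.map f).filter (· ≠ 0) = univ.val.map w) (hfg : ∀ i, f (g i) = w i)
    {j : κ} (hj : j ∉ Set.range g) : f j = 0 := by
  -- `f` has the same total over `range g` as over all of `κ`
  have htotal : ∑ j, f j = ∑ j ∈ univ.map ⟨g, hg⟩, f j := by
    calc ∑ j, f j = ((univ.val.map f).filter (· ≠ 0)).sum := by
          simp only [Multiset.filter_map, ← filter_val, sum_map_val, Function.comp_def,
            sum_filter_ne_zero]
      _ = ∑ j ∈ univ.map ⟨g, hg⟩, f j := by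
          rw [hf, sum_map_val, sum_map]
          exact sum_congr rfl fun i _ => (hfg i).symm
  have hrest := sum_sdiff (subset_univ (univ.map ⟨g, hg⟩)) (f := f)
  rw [← htotal, Nat.add_eq_right, sum_eq_zero_iff] at hrest
  exact hrest j (by simpa using hj)

theorem fiberSum_eq_iff {g : ι → κ} (hg : Function.Injective g) {f : κ → ℕ}
    (hf : (univ.val.map f).filter (· ≠ 0) = univ.val.map w) :
    fiberSum w g = f ↔ ∀ i, f (g i) = w i := by
  refine ⟨fun h i => h ▸ fiberSum_apply_of_injective w hg i, fun hfg => funext fun j => ?_⟩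
  by_cases hj : j ∈ Set.range g
  · obtain ⟨i, rfl⟩ := hj
    rw [fiberSum_apply_of_injective w hg, hfg]
  · rw [fiberSum_eq_zero_of_notMem_range w hj, eq_zero_of_filter_map_eq hg hf hfg hj]

end FiberSum

theorem sum_embedding_prod_X_pow_eq_smul_mSym {ι : Type*} [Fintype ι] [DecidableEq ι] (N : ℕ)
    {w : ι → ℕ} (hw : ∀ i, w i ≠ 0) :
    ∑ g : ι ↪ Fin N, ∏ i, (X (g i) : MvPolynomial (Fin N) ℤ) ^ w i
      = (multFact (univ.val.map w) : ℤ) • mSym N (univ.val.map w) := by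
  set μ := univ.val.map w
  let exponents (g : ι ↪ Fin N) (j : Fin N) : Fin (μ.sum + 1) :=
    ⟨fiberSum w g j, Nat.lt_succ_of_le (fiberSum_le_sum w g j)⟩
  have hmaps : ∀ g ∈ (univ : Finset (ι ↪ Fin N)),
      exponents g ∈ univ.filter fun f : Fin N → Fin (μ.sum + 1) =>
        ((univ.val.map fun i => (f i : ℕ)).filter fun k => k ≠ 0) = μ :=
    fun g _ => mem_filter.2 ⟨mem_univ _, filter_map_fiberSum hw g.injective⟩
  rw [mSym, smul_sum, ← sum_fiberwise_of_maps_to hmaps]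
  refine sum_congr rfl fun f hf => ?_
  have hfiber (g : ι ↪ Fin N) : exponents g = f ↔ ∀ i, (f (g i) : ℕ) = w i := by
    rw [← fiberSum_eq_iff g.injective (mem_filter.1 hf).2, funext_iff, funext_iff]
    simp only [exponents, Fin.ext_iff]
  calc ∑ g with exponents g = f, ∏ i, (X (g i) : MvPolynomial (Fin N) ℤ) ^ w i
      = ∑ g with exponents g = f, ∏ j, (X j : MvPolynomial (Fin N) ℤ) ^ (f j : ℕ) :=
        sum_congr rfl fun g hg => by
          rw [prod_pow_eq_prod_pow_fiberSum, ← (mem_filter.1 hg).2]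
    _ = _ := by
        rw [sum_const, filter_congr fun g _ => hfiber g, ← Fintype.card_subtype,
          card_embedding_comp_eq w (fun j => (f j : ℕ)) hw (mem_filter.1 hf).2, natCast_zsmul]

namespace Finpartition

variable {α : Type*} [DecidableEq α] {s : Finset α}

theorem parts_eq_image_part (P : Finpartition s) : P.parts = s.image P.part := by
  ext t
  refine ⟨fun ht => ?_, fun ht => ?_⟩
  · obtain ⟨a, ha⟩ := P.nonempty_of_mem_parts ht
    exact mem_image.2 ⟨a, P.le ht ha, P.part_eq_of_mem ht ha⟩
  · obtain ⟨a, ha, rfl⟩ := mem_image.1 ht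
    exact P.part_mem.2 ha

theorem ext_part {P Q : Finpartition s} (h : ∀ a ∈ s, P.part a = Q.part a) : P = Q :=
  Finpartition.ext <| by rw [parts_eq_image_part, parts_eq_image_part, image_congr h]

variable [Fintype α] (P : Finpartition (univ : Finset α))

def partOf (a : α) : P.parts := ⟨P.part a, P.part_mem.2 (mem_univ a)⟩

theorem partOf_eq_iff {a : α} {b : P.parts} : P.partOf a = b ↔ a ∈ b.1 := by
  rw [partOf, Subtype.ext_iff]
  exact P.part_eq_iff_mem b.2

theorem partOf_surjective : Function.Surjective P.partOf := fun b =>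
  let ⟨a, ha⟩ := P.nonempty_of_mem_parts b.2
  ⟨a, (P.partOf_eq_iff).2 ha⟩

theorem prod_comp_partOf {M : Type*} [CommMonoid M] (f : P.parts → M) :
    ∏ a, f (P.partOf a) = ∏ b, f b ^ #b.1 := by
  rw [← prod_fiberwise univ P.partOf]
  refine prod_congr rfl fun b _ => ?_
  rw [filter_congr fun a _ => P.partOf_eq_iff, filter_mem_eq_inter, univ_inter, ← prod_const]
  exact prod_congr rfl fun a ha => by rw [(P.partOf_eq_iff).2 ha]

end Finpartition

section FiberPartition

variable {V : Type} {C : Type*} [Fintype V] [DecidableEq V] [DecidableEq C]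

def fiberPart (κ : V → C) : Finpartition (univ : Finset V) :=
  Finpartition.ofSetoid (Setoid.ker κ)

theorem mem_part_fiberPart {κ : V → C} {u v : V} : u ∈ (fiberPart κ).part v ↔ κ u = κ v :=
  Finpartition.mem_part_ofSetoid_iff_rel.trans eq_comm

theorem fiberPart_eq_iff {κ : V → C} {P : Finpartition (univ : Finset V)} :
    fiberPart κ = P ↔ ∀ u v, κ u = κ v ↔ P.partOf u = P.partOf v := by
  constructor
  · rintro rfl u v
    rw [Finpartition.partOf_eq_iff]
    exact mem_part_fiberPart.symm
  · intro h
    refine Finpartition.ext_part fun a _ => Finset.ext fun u => ?_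
    rw [mem_part_fiberPart, h, Finpartition.partOf_eq_iff]
    rfl

theorem isStablePartition_fiberPart_iff (G : SimpleGraph V) (κ : V → C) :
    IsStablePartition G (fiberPart κ) ↔ ∀ u v, G.Adj u v → κ u ≠ κ v := by
  constructor
  · intro h u v huv hκ
    exact h _ ((fiberPart κ).part_mem.2 (mem_univ u)) u (mem_part_fiberPart.2 rfl) v
      (mem_part_fiberPart.2 hκ.symm) huv
  · intro h b hb u hu v hv huv
    rw [← (fiberPart κ).part_eq_of_mem hb hu, mem_part_fiberPart] at hv
    exact h u v huv hv.symm

theorem sum_fiberPart_eq_sum_embedding [Fintype C] (P : Finpartition (univ : Finset V))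
    {M : Type*} [AddCommMonoid M] (F : (V → C) → M) :
    ∑ κ with fiberPart κ = P, F κ = ∑ g : P.parts ↪ C, F (fun v => g (P.partOf v)) := by
  symm
  refine sum_bij (fun g _ v => g (P.partOf v)) (fun g _ => ?_) (fun g₁ _ g₂ _ h => ?_)
    (fun κ hκ => ?_) fun _ _ => rfl
  · exact mem_filter.2 ⟨mem_univ _, fiberPart_eq_iff.2 fun u v => g.injective.eq_iff⟩
  · exact DFunLike.ext _ _ fun b =>
      (P.partOf_surjective b).elim fun v hv => hv ▸ congrFun h v
  · have hP := fiberPart_eq_iff.1 (mem_filter.1 hκ).2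
    choose pt hpt using P.partOf_surjective
    refine ⟨⟨fun b => κ (pt b), fun b b' hb => ?_⟩, mem_univ _, funext fun v => ?_⟩
    · simpa only [hpt] using (hP _ _).1 hb
    · exact (hP _ _).2 (hpt _)

theorem typeOf_eq_map_card (P : Finpartition (univ : Finset V)) :
    typeOf P = univ.val.map fun b : P.parts => #b.1 := by
  rw [typeOf, univ_eq_attach, attach_val]
  exact (Multiset.attach_map_val' _ _).symm

theorem sum_fiberPart_eq_smul_mSym {N : ℕ} (P : Finpartition (univ : Finset V)) :
    ∑ κ : V → Fin N with fiberPart κ = P, ∏ v, (X (κ v) : MvPolynomial (Fin N) ℤ)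
      = (multFact (typeOf P) : ℤ) • mSym N (typeOf P) := by
  rw [sum_fiberPart_eq_sum_embedding, typeOf_eq_map_card, ← sum_embedding_prod_X_pow_eq_smul_mSym N
    fun b => (P.nonempty_of_mem_parts b.2).card_pos.ne']
  exact sum_congr rfl fun g _ => P.prod_comp_partOf fun b => X (g b)

open Classical in
theorem csf_eq_sum_sum_fiberPart (G : SimpleGraph V) (N : ℕ) :
    csf G N = ∑ P with IsStablePartition G P,
      ∑ κ : V → Fin N with fiberPart κ = P, ∏ v, (X (κ v) : MvPolynomial (Fin N) ℤ) := by
  rw [csf, ← sum_fiberwise_of_maps_to (g := fiberPart) fun κ hκ =>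
    mem_filter.2 ⟨mem_univ _, (isStablePartition_fiberPart_iff G κ).2 (mem_filter.1 hκ).2⟩]
  refine sum_congr rfl fun P hP => sum_congr (Finset.ext fun κ => ?_) fun _ _ => rfl
  simp only [mem_filter, mem_univ, true_and, and_iff_right_iff_imp]
  rintro rfl
  exact (isStablePartition_fiberPart_iff G κ).1 (mem_filter.1 hP).2

end FiberPartition

open Classical in
theorem csf_eq_sum_stable_partitions_general {V : Type} [Fintype V] [DecidableEq V]
    (G : SimpleGraph V) (N : ℕ) :
    csf G N = ∑ P ∈ Finset.univ.filter
        (fun P : Finpartition (Finset.univ : Finset V) => IsStablePartition G P),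
      (multFact (typeOf P) : ℤ) • mSym N (typeOf P) := by
  rw [csf_eq_sum_sum_fiberPart]
  exact sum_congr rfl fun P _ => sum_fiberPart_eq_smul_mSym P

open Classical in
/-- **Theorem (Stanley).** `X_G = Σ_π μ(π)^! · m_{μ(π)}`, the sum over all stable
partitions `π` of `G`, where `μ(π)` is the type of `π`. -/
theorem csf_eq_sum_stable_partitions {V : Type} [Fintype V] [DecidableEq V]
    (G : SimpleGraph V) (N : ℕ) (hN : Fintype.card V ≤ N) :
    csf G N = ∑ P ∈ Finset.univ.filter
        (fun P : Finpartition (Finset.univ : Finset V) => IsStablePartition G P),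
      (multFact (typeOf P) : ℤ) • mSym N (typeOf P) :=
  csf_eq_sum_stable_partitions_general G N
end

section
/- Let G be a Schur positive finite simple graph. If G has a stable partition of type λ, then G has a stable partition of type μ for every partition μ of |V(G)| that is dominated by λ. -/
open Finset MvPolynomial

/-- `μ` is dominated by `λ`: every partial sum of the parts of `μ` (in weakly
decreasing order) is at most the corresponding partial sum for `λ`. -/
def Dominates {n : ℕ} (lam mu : n.Partition) : Prop :=
  ∀ t : ℕ, ((mu.parts.sort (· ≥ ·)).take t).sum ≤ ((lam.parts.sort (· ≥ ·)).take t).sum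

/-!
The coefficient of `x^λ = x₁^{λ₁} ⋯ x_N^{λ_N}` in `X_G` counts the proper colorings whose color
classes have sizes `λ₁, λ₂, …`, so it is positive exactly when `G` has a stable partition of type
`λ`. The coefficient of `x^μ` in `s_ν` is the Kostka number `K_{νμ}`, which is positive exactly
when `ν` dominates `μ`. If `X_G = ∑ c_ν s_ν` with all `c_ν ≥ 0`, the positive coefficient of `x^λ`
forces `c_ν > 0` for some `ν ⊵ λ`; as `ν ⊵ λ ⊵ μ`, this one term already makes the coefficient
of `x^μ` positive.
-/

theorem List.sum_take_eq_sum_range_getD {M : Type*} [AddCommMonoid M] (l : List M) (t : ℕ) :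
    (l.take t).sum = ∑ r ∈ Finset.range t, l.getD r 0 := by
  induction l generalizing t with
  | nil => simp
  | cons a l ih =>
    cases t with
    | zero => simp
    | succ t => simp [Finset.sum_range_succ', ih, add_comm]

theorem Finset.card_filter_coe_sort {α : Type*} (s : Finset α) (p : α → Prop) [DecidablePred p] :
    #{x : s | p x} = #{x ∈ s | p x} := by
  simp only [Finset.card_filter]
  exact Finset.sum_coe_sort s fun x => if p x then 1 else 0

theorem Multiset.exists_list_of_map_eq_coe {α β : Type*} {f : α → β} :
    ∀ {s : Multiset α} {l : List β}, s.map f = l → ∃ L : List α, s = L ∧ L.map f = l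
  | s, [], h => ⟨[], Multiset.map_eq_zero.1 h, rfl⟩
  | s, b :: l, h => by
    obtain ⟨a, ha, rfl⟩ := Multiset.mem_map.1 (h ▸ Multiset.mem_coe.2 List.mem_cons_self)
    obtain ⟨s', rfl⟩ := Multiset.exists_cons_of_mem ha
    rw [Multiset.map_cons, ← Multiset.cons_coe, Multiset.cons_inj_right] at h
    obtain ⟨L, rfl, hL⟩ := Multiset.exists_list_of_map_eq_coe h
    exact ⟨a :: L, (Multiset.cons_coe a L).symm, by rw [List.map_cons, hL]⟩

theorem Fin.map_valEmbedding_filter_lt {N k : ℕ} (hk : k ≤ N) :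
    ({i : Fin N | (i : ℕ) < k} : Finset (Fin N)).map Fin.valEmbedding = range k := by
  ext x
  simp only [Finset.mem_map, Finset.mem_filter, Finset.mem_univ, true_and, Fin.valEmbedding_apply,
    Finset.mem_range]
  exact ⟨fun ⟨i, hi, hix⟩ => hix ▸ hi, fun hx => ⟨⟨x, by omega⟩, hx, rfl⟩⟩

namespace Nat.Partition

variable {n : ℕ}

def rowLen (p : n.Partition) (r : ℕ) : ℕ :=
  (p.parts.sort (· ≥ ·)).getD r 0

/-- The exponent vector of the monomial `x^p = x₁^{p₁} ⋯ x_N^{p_N}`, where `p₁ ≥ p₂ ≥ ⋯`. -/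
noncomputable def weight (N : ℕ) (p : n.Partition) : Fin N →₀ ℕ :=
  Finsupp.equivFunOnFinite.symm fun i => p.rowLen i

@[simp]
theorem weight_apply (N : ℕ) (p : n.Partition) (i : Fin N) : p.weight N i = p.rowLen i :=
  rfl

theorem mem_diagramOf {p : n.Partition} {r c : ℕ} :
    (r, c) ∈ diagramOf p ↔ c < p.rowLen r := by
  rw [diagramOf, YoungDiagram.mem_ofRowLens, rowLen]
  rcases lt_or_ge r (p.parts.sort (· ≥ ·)).length with h | h
  · rw [List.getD_eq_getElem _ _ h]
    exact ⟨fun ⟨_, hc⟩ => hc, fun hc => ⟨h, hc⟩⟩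
  · rw [List.getD_eq_default _ _ h]
    exact ⟨fun ⟨h', _⟩ => absurd h' (not_lt.2 h), fun hc => absurd hc (Nat.not_lt_zero c)⟩

theorem rowLen_diagramOf (p : n.Partition) : (diagramOf p).rowLen = p.rowLen :=
  funext fun _ => eq_of_forall_lt_iff fun _ => by
    rw [← YoungDiagram.mem_iff_lt_rowLen, mem_diagramOf]

theorem rowLen_antitone (p : n.Partition) : Antitone p.rowLen :=
  rowLen_diagramOf p ▸ fun _ _ h => (diagramOf p).rowLen_anti _ _ h

theorem rowLen_eq_zero {p : n.Partition} {r : ℕ} (h : p.parts.card ≤ r) : p.rowLen r = 0 :=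
  List.getD_eq_default _ _ (by rwa [Multiset.length_sort])

theorem rowLen_pos {p : n.Partition} {r : ℕ} (h : r < p.parts.card) : 0 < p.rowLen r := by
  have hr : r < (p.parts.sort (· ≥ ·)).length := by rwa [Multiset.length_sort]
  rw [rowLen, List.getD_eq_getElem _ _ hr]
  exact p.parts_pos ((Multiset.mem_sort _).1 (List.getElem_mem hr))

theorem card_parts_le (p : n.Partition) : p.parts.card ≤ n := by
  simpa [p.parts_sum] using
    Multiset.card_nsmul_le_sum (s := p.parts) (a := 1) fun _ hx => p.parts_pos hx

theorem sum_range_rowLen (p : n.Partition) (t : ℕ) :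
    ∑ r ∈ range t, p.rowLen r = ((p.parts.sort (· ≥ ·)).take t).sum :=
  (List.sum_take_eq_sum_range_getD _ t).symm

theorem sum_range_rowLen_of_card_le (p : n.Partition) {t : ℕ} (h : p.parts.card ≤ t) :
    ∑ r ∈ range t, p.rowLen r = n := by
  rw [sum_range_rowLen, List.take_of_length_le (by rwa [Multiset.length_sort]),
    ← Multiset.sum_coe, Multiset.sort_eq, p.parts_sum]

theorem sum_range_rowLen_le (p : n.Partition) (t : ℕ) : ∑ r ∈ range t, p.rowLen r ≤ n := by
  calc ∑ r ∈ range t, p.rowLen r ≤ ∑ r ∈ range (max t p.parts.card), p.rowLen r :=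
        Finset.sum_le_sum_of_subset (Finset.range_subset_range.2 (le_max_left _ _))
    _ = n := p.sum_range_rowLen_of_card_le (le_max_right _ _)

theorem map_range_rowLen (p : n.Partition) :
    (Multiset.range p.parts.card).map p.rowLen = p.parts := by
  conv_rhs => rw [← Multiset.sort_eq p.parts (· ≥ ·)]
  rw [Multiset.range, Multiset.map_coe, Multiset.coe_eq_coe, ← Multiset.length_sort (· ≥ ·)]
  refine List.Perm.of_eq (List.ext_getElem (by simp) fun i _ h => ?_)
  rw [List.getElem_map, List.getElem_range]
  exact List.getD_eq_getElem _ _ h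

end Nat.Partition

open Nat.Partition

theorem dominates_iff_sum_rowLen {n : ℕ} {p q : n.Partition} :
    Dominates p q ↔ ∀ t, ∑ r ∈ range t, q.rowLen r ≤ ∑ r ∈ range t, p.rowLen r := by
  simp only [Dominates, sum_range_rowLen]

theorem Dominates.trans {n : ℕ} {p q s : n.Partition} (hpq : Dominates p q)
    (hqs : Dominates q s) : Dominates p s :=
  fun t => (hqs t).trans (hpq t)

theorem rowLen_eq_zero_of_dominates {n : ℕ} {p q : n.Partition} (h : Dominates p q) {r : ℕ}
    (hr : q.parts.card ≤ r) : p.rowLen r = 0 := by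
  have hq := dominates_iff_sum_rowLen.1 h q.parts.card
  have hle := p.sum_range_rowLen_le (r + 1)
  have hmono : ∑ x ∈ range q.parts.card, p.rowLen x ≤ ∑ x ∈ range r, p.rowLen x :=
    Finset.sum_le_sum_of_subset (Finset.range_subset_range.2 hr)
  rw [q.sum_range_rowLen_of_card_le le_rfl] at hq
  rw [Finset.sum_range_succ] at hle
  omega

section Content

variable {A σ : Type*} [Fintype A]

noncomputable def content (f : A → σ) : σ →₀ ℕ :=
  ∑ a, Finsupp.single (f a) 1

theorem content_apply [DecidableEq σ] (f : A → σ) (i : σ) : content f i = #{a | f a = i} := by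
  rw [content, Finsupp.finsetSum_apply, Finset.card_filter]
  simp only [Finsupp.single_apply]

theorem content_eq_weight_iff {N n : ℕ} (f : A → Fin N) (p : n.Partition) :
    content f = p.weight N ↔ ∀ i, #{a | f a = i} = p.rowLen i := by
  simp only [Finsupp.ext_iff, content_apply, weight_apply]

theorem coeff_sum_prod_X [DecidableEq σ] (S : Finset (A → σ)) (m : σ →₀ ℕ) :
    coeff m (∑ f ∈ S, ∏ a, (X (f a) : MvPolynomial σ ℤ)) = #{f ∈ S | content f = m} := by
  simp only [X, ← monomial_sum_one, coeff_sum, coeff_monomial, Finset.card_filter]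
  push_cast
  rfl

theorem coeff_sum_prod_X_nonneg (S : Finset (A → σ)) (m : σ →₀ ℕ) :
    0 ≤ coeff m (∑ f ∈ S, ∏ a, (X (f a) : MvPolynomial σ ℤ)) := by
  classical
  rw [coeff_sum_prod_X]
  exact Nat.cast_nonneg _

theorem coeff_sum_prod_X_pos_iff (S : Finset (A → σ)) (m : σ →₀ ℕ) :
    0 < coeff m (∑ f ∈ S, ∏ a, (X (f a) : MvPolynomial σ ℤ)) ↔ ∃ f ∈ S, content f = m := by
  classical
  rw [coeff_sum_prod_X, Nat.cast_pos, Finset.card_pos, Finset.filter_nonempty_iff]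

end Content

theorem coeff_sum_smul_pos_of_imp {R σ ι : Type*} [CommSemiring R] [LinearOrder R]
    [IsStrictOrderedRing R] {s : Finset ι} {c : ι → R} (hc : ∀ i, 0 ≤ c i)
    {p : ι → MvPolynomial σ R} {m m' : σ →₀ ℕ} (hp : ∀ i, 0 ≤ coeff m' (p i))
    (himp : ∀ i, 0 < coeff m (p i) → 0 < coeff m' (p i))
    (hm : 0 < coeff m (∑ i ∈ s, c i • p i)) : 0 < coeff m' (∑ i ∈ s, c i • p i) := by
  simp only [coeff_sum, coeff_smul, smul_eq_mul] at hm ⊢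
  obtain ⟨i, hi, hpos⟩ := Finset.exists_lt_of_sum_lt (f := fun _ => (0 : R))
    (g := fun i => c i * coeff m (p i)) (by rwa [Finset.sum_const_zero])
  have hci : 0 < c i := (hc i).lt_of_ne fun h => by
    simp only [← h, zero_mul, lt_self_iff_false] at hpos
  exact Finset.sum_pos' (fun j _ => mul_nonneg (hc j) (hp j))
    ⟨i, hi, mul_pos hci (himp i (pos_of_mul_pos_right hpos (hc i)))⟩

section Filling

/-- Row lengths of the shape `ν` after deleting a horizontal strip of `m` cells, taken from the
right ends of the rows: row `r` loses `min m (ν r) - min m (ν (r + 1))` cells. -/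
def stripRemove (ν : ℕ → ℕ) (m r : ℕ) : ℕ :=
  ν r - min m (ν r) + min m (ν (r + 1))

variable {ν μ : ℕ → ℕ} {m k : ℕ}

theorem stripRemove_le (hν : Antitone ν) (r : ℕ) : stripRemove ν m r ≤ ν r := by
  have := hν (Nat.le_add_right r 1)
  unfold stripRemove
  omega

theorem le_stripRemove (hν : Antitone ν) (r : ℕ) : ν (r + 1) ≤ stripRemove ν m r := by
  have := hν (Nat.le_add_right r 1)
  unfold stripRemove
  omega

theorem stripRemove_antitone (hν : Antitone ν) : Antitone (stripRemove ν m) :=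
  antitone_nat_of_succ_le fun r => (stripRemove_le hν (r + 1)).trans (le_stripRemove hν r)

theorem sum_range_stripRemove_add (ν : ℕ → ℕ) (m t : ℕ) :
    ∑ r ∈ range t, stripRemove ν m r + min m (ν 0) = ∑ r ∈ range t, ν r + min m (ν t) := by
  induction t with
  | zero => simp
  | succ t ih =>
    have : stripRemove ν m t = ν t - min m (ν t) + min m (ν (t + 1)) := rfl
    rw [Finset.sum_range_succ, Finset.sum_range_succ]
    omega

theorem stripRemove_eq_zero (hν : Antitone ν) (hν0 : ∀ r, k + 1 ≤ r → ν r = 0) (hνk : ν k ≤ m)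
    {r : ℕ} (hr : k ≤ r) : stripRemove ν m r = 0 := by
  have := hν hr
  have := hν0 (r + 1) (by omega)
  unfold stripRemove
  omega

theorem sum_range_le_sum_range_stripRemove (hμ : Antitone μ)
    (hdom : ∀ t ≤ k + 1, ∑ r ∈ range t, μ r ≤ ∑ r ∈ range t, ν r) (hm : μ k ≤ ν 0)
    {t : ℕ} (ht : t ≤ k) : ∑ r ∈ range t, μ r ≤ ∑ r ∈ range t, stripRemove ν (μ k) r := by
  have htel := sum_range_stripRemove_add ν (μ k) t
  have hdom' := hdom (t + 1) (by omega)
  have := hdom t (by omega)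
  have := hμ ht
  rw [min_eq_left hm] at htel
  rw [Finset.sum_range_succ, Finset.sum_range_succ] at hdom'
  omega

structure IsFilling (ν : ℕ → ℕ) (k : ℕ) (T : ℕ × ℕ → ℕ) : Prop where
  row_le : ∀ r c d, c ≤ d → d < ν r → T (r, c) ≤ T (r, d)
  col_lt : ∀ r s c, r < s → c < ν s → T (r, c) < T (s, c)
  lt : ∀ r c, c < ν r → T (r, c) < k

theorem isFilling_of_eq_zero (hν : ∀ r, ν r = 0) (T : ℕ × ℕ → ℕ) : IsFilling ν k T where
  row_le r _ _ _ h := absurd h (by simp [hν])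
  col_lt _ s _ _ h := absurd h (by simp [hν])
  lt r _ h := absurd h (by simp [hν])

section Extend

variable {ν' : ℕ → ℕ} {T : ℕ × ℕ → ℕ}

def extendFilling (ν' : ℕ → ℕ) (T : ℕ × ℕ → ℕ) (k : ℕ) (x : ℕ × ℕ) : ℕ :=
  if x.2 < ν' x.1 then T x else k

/-- `hge` says that `ν / ν'` is a horizontal strip. -/
theorem IsFilling.extend (hT : IsFilling ν' k T) (hν : Antitone ν)
    (hge : ∀ r, ν (r + 1) ≤ ν' r) : IsFilling ν (k + 1) (extendFilling ν' T k) where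
  row_le r c d hcd hd := by
    have := hT.row_le r c d hcd
    have := hT.lt r c
    simp only [extendFilling]
    split_ifs <;> omega
  col_lt r s c hrs hc := by
    have hcr : c < ν' r := hc.trans_le ((hν hrs).trans (hge r))
    have := hT.col_lt r s c hrs
    have := hT.lt r c hcr
    simp only [extendFilling]
    split_ifs <;> omega
  lt r c _ := by
    have := hT.lt r c
    simp only [extendFilling]
    split_ifs <;> omega

theorem card_filter_extendFilling_of_lt (hT : IsFilling ν' k T) (hle : ∀ r, ν' r ≤ ν r)
    {i : ℕ} (hi : i < k) (r : ℕ) :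
    #{c ∈ range (ν r) | extendFilling ν' T k (r, c) = i} = #{c ∈ range (ν' r) | T (r, c) = i} := by
  congr 1
  ext c
  have := hle r
  have := hT.lt r c
  rw [Finset.mem_filter, Finset.mem_filter]
  simp only [Finset.mem_range, extendFilling]
  split_ifs <;> omega

theorem card_filter_extendFilling_self (hT : IsFilling ν' k T) (r : ℕ) :
    #{c ∈ range (ν r) | extendFilling ν' T k (r, c) = k} = ν r - ν' r := by
  rw [← Nat.card_Ico]
  congr 1
  ext c
  have := hT.lt r c
  rw [Finset.mem_filter, Finset.mem_Ico]
  simp only [Finset.mem_range, extendFilling]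
  split_ifs <;> omega

end Extend

/-- The largest entry `k` fills the horizontal strip of `μ k` cells deleted by `stripRemove`; the
rest of the shape is filled by induction. -/
theorem exists_isFilling : ∀ (k : ℕ) (ν μ : ℕ → ℕ), Antitone ν → Antitone μ →
    (∀ r, k ≤ r → ν r = 0) → (∀ t ≤ k, ∑ r ∈ range t, μ r ≤ ∑ r ∈ range t, ν r) →
    ∑ r ∈ range k, ν r = ∑ r ∈ range k, μ r →
    ∃ T, IsFilling ν k T ∧ ∀ i < k, ∑ r ∈ range k, #{c ∈ range (ν r) | T (r, c) = i} = μ i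
  | 0, ν, μ, _, _, hν0, _, _ =>
    ⟨fun _ => 0, isFilling_of_eq_zero (fun r => hν0 r r.zero_le) _,
      fun _ hi => absurd hi (Nat.not_lt_zero _)⟩
  | k + 1, ν, μ, hν, hμ, hν0, hdom, htot => by
    have hm : μ k ≤ ν 0 := by
      simpa using (hμ k.zero_le).trans (hdom 1 (by omega))
    have hνk : ν k ≤ μ k := by
      have := hdom k (by omega)
      rw [Finset.sum_range_succ, Finset.sum_range_succ] at htot
      omega
    have htel := sum_range_stripRemove_add ν (μ k)
    simp only [min_eq_left hm] at htel
    obtain ⟨T, hT, hcont⟩ := exists_isFilling k (stripRemove ν (μ k)) μ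
      (stripRemove_antitone hν) hμ (fun r => stripRemove_eq_zero hν hν0 hνk)
      (fun t => sum_range_le_sum_range_stripRemove hμ hdom hm) (by
        have := htel k
        rw [min_eq_right hνk, ← Finset.sum_range_succ, htot, Finset.sum_range_succ] at this
        omega)
    refine ⟨_, hT.extend hν (le_stripRemove hν), fun i hi => ?_⟩
    rcases Nat.lt_succ_iff_lt_or_eq.1 hi with hi | hi
    · simp only [card_filter_extendFilling_of_lt hT (stripRemove_le hν) hi]
      rw [Finset.sum_range_succ, stripRemove_eq_zero hν hν0 hνk le_rfl]
      simpa using hcont i hi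
    · rw [hi]
      simp only [card_filter_extendFilling_self hT]
      rw [Finset.sum_tsub_distrib _ fun r _ => stripRemove_le hν r]
      have := htel (k + 1)
      rw [hν0 (k + 1) le_rfl, min_eq_right (Nat.zero_le _)] at this
      omega

end Filling

namespace YoungDiagram

theorem card_filter_cells_fst_lt (D : YoungDiagram) (t : ℕ) :
    #{x ∈ D.cells | x.1 < t} = ∑ r ∈ range t, D.rowLen r := by
  rw [Finset.card_eq_sum_card_fiberwise (f := Prod.fst) (t := range t)
    fun x hx => Finset.mem_range.2 (Finset.mem_filter.1 hx).2]
  refine Finset.sum_congr rfl fun r hr => ?_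
  rw [rowLen_eq_card, row, Finset.filter_filter]
  congr 1
  exact Finset.filter_congr fun x _ => ⟨And.right, fun h => ⟨h ▸ Finset.mem_range.1 hr, h⟩⟩

theorem card_filter_cells_eq_sum (D : YoungDiagram) {K : ℕ} (hK : D.rowLen K = 0)
    (p : ℕ × ℕ → Prop) [DecidablePred p] :
    #{x ∈ D.cells | p x} = ∑ r ∈ range K, #{c ∈ range (D.rowLen r) | p (r, c)} := by
  have hrow : ∀ x ∈ D.cells, x.1 ∈ range K := fun x hx => by
    have := D.rowLen_anti K x.1
    have := mem_iff_lt_rowLen.1 (show (x.1, x.2) ∈ D from hx)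
    exact Finset.mem_range.2 (by omega)
  simp only [Finset.card_filter]
  rw [← Finset.sum_fiberwise_of_maps_to hrow]
  refine Finset.sum_congr rfl fun r _ => ?_
  rw [← row, row_eq_prod, Finset.sum_product, Finset.sum_singleton]

end YoungDiagram

section Kostka

variable {n N : ℕ}

theorem IsSSYTof.fst_le {D : YoungDiagram} {T : D.cells → Fin N} (hT : IsSSYTof D N T) :
    ∀ x : D.cells, x.1.1 ≤ T x := by
  rintro ⟨⟨r, c⟩, hx⟩
  induction r with
  | zero => exact Nat.zero_le _
  | succ r ih =>
    have hx' : (r, c) ∈ D.cells := D.up_left_mem (Nat.le_succ r) le_rfl hx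
    exact (ih hx').trans_lt (hT.2 ⟨_, hx'⟩ ⟨_, hx⟩ rfl (Nat.lt_succ_self r))

/-- Entries `< t` of a semistandard tableau lie in its first `t` rows. -/
theorem dominates_of_isSSYTof (hN : n ≤ N) {ν μ : n.Partition} {T : (diagramOf ν).cells → Fin N}
    (hT : IsSSYTof (diagramOf ν) N T) (hc : content T = μ.weight N) : Dominates ν μ := by
  have hcount : ∀ i : ℕ, #{x | (T x : ℕ) = i} = μ.rowLen i := by
    intro i
    rcases lt_or_ge i N with hi | hi
    · rw [← (content_eq_weight_iff T μ).1 hc ⟨i, hi⟩]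
      simp only [Fin.ext_iff]
    · rw [rowLen_eq_zero (μ.card_parts_le.trans (hN.trans hi)), Finset.card_eq_zero,
        Finset.filter_eq_empty_iff]
      exact fun x _ => ((T x).isLt.trans_le hi).ne
  refine dominates_iff_sum_rowLen.2 fun t => ?_
  calc ∑ i ∈ range t, μ.rowLen i = #{x | (T x : ℕ) < t} := by
        rw [Finset.card_eq_sum_card_fiberwise (f := fun x => (T x : ℕ)) (t := range t)
          fun x hx => Finset.mem_range.2 (Finset.mem_filter.1 hx).2]
        refine Finset.sum_congr rfl fun i hi => ?_
        rw [Finset.filter_filter, ← hcount i]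
        congr 1
        exact Finset.filter_congr fun x _ =>
          ⟨fun h => ⟨(congrArg (· < t) h).mpr (Finset.mem_range.1 hi), h⟩, And.right⟩
    _ ≤ #{x : (diagramOf ν).cells | x.1.1 < t} :=
        Finset.card_le_card fun x hx => by
          simp only [Finset.mem_filter] at hx ⊢
          exact ⟨hx.1, (hT.fst_le x).trans_lt hx.2⟩
    _ = #{x ∈ (diagramOf ν).cells | x.1 < t} :=
        Finset.card_filter_coe_sort _ fun x : ℕ × ℕ => x.1 < t
    _ = ∑ r ∈ range t, ν.rowLen r := by
        rw [YoungDiagram.card_filter_cells_fst_lt, rowLen_diagramOf]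

theorem exists_isSSYTof_of_dominates (hN : n ≤ N) {ν μ : n.Partition} (h : Dominates ν μ) :
    ∃ T : (diagramOf ν).cells → Fin N, IsSSYTof (diagramOf ν) N T ∧ content T = μ.weight N := by
  have hdom := dominates_iff_sum_rowLen.1 h
  have hk : ν.rowLen μ.parts.card = 0 := rowLen_eq_zero_of_dominates h le_rfl
  obtain ⟨T, hT, hcont⟩ := exists_isFilling μ.parts.card ν.rowLen μ.rowLen ν.rowLen_antitone
    μ.rowLen_antitone (fun r => rowLen_eq_zero_of_dominates h) (fun t _ => hdom t)
    (le_antisymm (by rw [μ.sum_range_rowLen_of_card_le le_rfl]; exact ν.sum_range_rowLen_le _)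
      (hdom _))
  have hlt : ∀ x : (diagramOf ν).cells, T x < μ.parts.card := fun x =>
    hT.lt _ _ (mem_diagramOf.1 x.2)
  refine ⟨fun x => ⟨T x, (hlt x).trans_le (μ.card_parts_le.trans hN)⟩, ⟨?_, ?_⟩, ?_⟩
  · rintro ⟨⟨r, c⟩, -⟩ ⟨⟨r', d⟩, hd⟩ (rfl : r = r') (hcd : c ≤ d)
    exact hT.row_le r c d hcd (mem_diagramOf.1 hd)
  · rintro ⟨⟨r, c⟩, -⟩ ⟨⟨s, c'⟩, hd⟩ (rfl : c = c') (hrs : r < s)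
    exact hT.col_lt r s c hrs (mem_diagramOf.1 hd)
  · refine (content_eq_weight_iff _ μ).2 fun i => ?_
    simp only [Fin.ext_iff]
    rw [Finset.card_filter_coe_sort (p := fun x => T x = i),
      YoungDiagram.card_filter_cells_eq_sum _ (by rwa [rowLen_diagramOf]), rowLen_diagramOf]
    rcases lt_or_ge (i : ℕ) μ.parts.card with hi | hi
    · exact hcont i hi
    · rw [rowLen_eq_zero hi]
      refine Finset.sum_eq_zero fun r _ => Finset.card_eq_zero.2 (Finset.filter_eq_empty_iff.2 ?_)
      exact fun c hc => ((hT.lt r c (Finset.mem_range.1 hc)).trans_le hi).ne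

theorem coeff_schurShape_nonneg (D : YoungDiagram) (m : Fin N →₀ ℕ) :
    0 ≤ coeff m (schurShape N D) := by
  unfold schurShape
  exact coeff_sum_prod_X_nonneg _ m

theorem coeff_schurShape_pos_iff (D : YoungDiagram) (m : Fin N →₀ ℕ) :
    0 < coeff m (schurShape N D) ↔ ∃ T, IsSSYTof D N T ∧ content T = m := by
  unfold schurShape
  rw [coeff_sum_prod_X_pos_iff]
  simp

/-- This coefficient is the Kostka number `K_{νμ}`. -/
theorem coeff_weight_schur_pos_iff (hN : n ≤ N) (ν μ : n.Partition) :
    0 < coeff (μ.weight N) (schur N ν) ↔ Dominates ν μ := by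
  rw [schur, coeff_schurShape_pos_iff]
  exact ⟨fun ⟨_, hT, hc⟩ => dominates_of_isSSYTof hN hT hc, exists_isSSYTof_of_dominates hN⟩

end Kostka

section Coloring

variable {V : Type} [Fintype V] {G : SimpleGraph V} {n N : ℕ}

theorem coeff_csf_pos_iff (m : Fin N →₀ ℕ) :
    0 < coeff m (csf G N) ↔ ∃ κ : V → Fin N, (∀ u v, G.Adj u v → κ u ≠ κ v) ∧ content κ = m := by
  unfold csf
  rw [coeff_sum_prod_X_pos_iff]
  simp

variable [DecidableEq V]

/-- Color the blocks of `P` in order of decreasing size. -/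
theorem exists_coloring_of_isStablePartition (hN : n ≤ N) {p : n.Partition}
    {P : Finpartition (univ : Finset V)} (hP : IsStablePartition G P) (hPp : typeOf P = p.parts) :
    ∃ κ : V → Fin N, (∀ u v, G.Adj u v → κ u ≠ κ v) ∧ content κ = p.weight N := by
  obtain ⟨L, hL, hLp⟩ := Multiset.exists_list_of_map_eq_coe
    (hPp.trans (Multiset.sort_eq p.parts (· ≥ ·)).symm)
  have hnodup : L.Nodup := by
    rw [← Multiset.coe_nodup, ← hL]
    exact P.parts.nodup
  have hmem : ∀ b, b ∈ L ↔ b ∈ P.parts := fun b => by rw [← Finset.mem_val, hL, Multiset.mem_coe]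
  have hlen : L.length = p.parts.card := by
    rw [← Multiset.length_sort (· ≥ ·), ← hLp, List.length_map]
  have hpart : ∀ v, P.part v ∈ L := fun v => (hmem _).2 (P.part_mem.2 (Finset.mem_univ v))
  have hidx : ∀ v, L.idxOf (P.part v) < L.length := fun v => List.idxOf_lt_length_iff.2 (hpart v)
  have hfiber : ∀ v i (hi : i < L.length), L.idxOf (P.part v) = i ↔ v ∈ L[i] := fun v i hi => by
    rw [← P.part_eq_iff_mem ((hmem _).1 (List.getElem_mem hi))]
    refine ⟨fun h => ?_, fun h => h ▸ hnodup.idxOf_getElem i hi⟩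
    subst h
    exact (List.getElem_idxOf (hidx v)).symm
  refine ⟨fun v => ⟨L.idxOf (P.part v), (hidx v).trans_le (hlen ▸ p.card_parts_le.trans hN)⟩,
    fun u v huv h => ?_, (content_eq_weight_iff _ p).2 fun i => ?_⟩
  · have huv' : P.part u = P.part v := (List.idxOf_inj (hpart u)).1 (congrArg Fin.val h)
    exact hP _ (P.part_mem.2 (Finset.mem_univ u)) u (P.mem_part (Finset.mem_univ u)) v
      (huv' ▸ P.mem_part (Finset.mem_univ v)) huv
  · simp only [Fin.ext_iff]
    rcases lt_or_ge (i : ℕ) L.length with hi | hi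
    · have hget : L[(i : ℕ)].card = p.rowLen i := by
        rw [Nat.Partition.rowLen, ← hLp, List.getD_eq_getElem _ _ (by simpa using hi),
          List.getElem_map]
      rw [← hget]
      congr 1
      ext v
      simp [hfiber v i hi]
    · rw [rowLen_eq_zero (hlen ▸ hi), Finset.card_eq_zero, Finset.filter_eq_empty_iff]
      exact fun v _ => ((hidx v).trans_le hi).ne

theorem exists_isStablePartition_of_coloring (hN : n ≤ N) {p : n.Partition} {κ : V → Fin N}
    (hκ : ∀ u v, G.Adj u v → κ u ≠ κ v) (hc : content κ = p.weight N) :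
    ∃ Q : Finpartition (univ : Finset V), IsStablePartition G Q ∧ typeOf Q = p.parts := by
  classical
  have hcount := (content_eq_weight_iff κ p).1 hc
  let fiber : Fin N → Finset V := fun i => {v | κ v = i}
  let colors : Finset (Fin N) := {i | (i : ℕ) < p.parts.card}
  have hcolors : ∀ i, (fiber i).Nonempty ↔ i ∈ colors := fun i => by
    rw [← Finset.card_pos, hcount, Finset.mem_filter]
    exact ⟨fun h => ⟨Finset.mem_univ i, not_le.1 fun h' => (rowLen_eq_zero h' ▸ h).ne rfl⟩,
      fun h => rowLen_pos h.2⟩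
  let Q := Finpartition.ofSetoid (Setoid.ker κ)
  have hQ : Q.parts = colors.image fiber := by
    ext b
    simp only [Q, Finpartition.ofSetoid, Finpartition.ofSetSetoid_parts, Finset.mem_image,
      Finset.mem_univ, true_and, Setoid.ker, Function.onFun, ← hcolors]
    constructor
    · rintro ⟨v, rfl⟩
      exact ⟨κ v, ⟨v, by simp [fiber]⟩, by ext; simp [fiber, eq_comm]⟩
    · rintro ⟨i, ⟨v, hv⟩, rfl⟩
      refine ⟨v, ?_⟩
      ext
      simp_all [fiber, eq_comm]
  refine ⟨Q, fun b hb u hu v hv huv => ?_, ?_⟩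
  · rw [hQ, Finset.mem_image] at hb
    obtain ⟨i, -, rfl⟩ := hb
    exact hκ u v huv ((Finset.mem_filter.1 hu).2.trans (Finset.mem_filter.1 hv).2.symm)
  · have hinj : Set.InjOn fiber colors := fun i hi j _ hij => by
      obtain ⟨v, hv⟩ := (hcolors i).2 hi
      have hvj : v ∈ fiber j := hij ▸ hv
      exact (Finset.mem_filter.1 hv).2.symm.trans (Finset.mem_filter.1 hvj).2
    rw [typeOf, hQ, Finset.image_val_of_injOn hinj, Multiset.map_map]
    have hcard : colors.val.map (Finset.card ∘ fiber) = colors.val.map (p.rowLen ∘ Fin.val) :=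
      Multiset.map_congr rfl fun i _ => hcount i
    have hval : colors.val.map Fin.val = Multiset.range p.parts.card := by
      rw [← Finset.range_val, ← Fin.map_valEmbedding_filter_lt (p.card_parts_le.trans hN),
        Finset.map_val]
      rfl
    rw [hcard, ← Multiset.map_map, hval, p.map_range_rowLen]

theorem coeff_weight_csf_pos_iff (hN : n ≤ N) (p : n.Partition) :
    0 < coeff (p.weight N) (csf G N) ↔
      ∃ P : Finpartition (univ : Finset V), IsStablePartition G P ∧ typeOf P = p.parts := by
  rw [coeff_csf_pos_iff]
  exact ⟨fun ⟨_, hκ, hc⟩ => exists_isStablePartition_of_coloring hN hκ hc,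
    fun ⟨_, hP, hPp⟩ => exists_coloring_of_isStablePartition hN hP hPp⟩

end Coloring

/-- **Proposition (Stanley).** If a Schur positive graph `G` has a stable partition
of type `λ`, then it has a stable partition of type `μ` for every partition `μ` of
`|V(G)|` dominated by `λ`. -/
theorem stable_partition_of_dominated {V : Type} [Fintype V] [DecidableEq V]
    (G : SimpleGraph V) (hG : SchurPositive G)
    (lam mu : (Fintype.card V).Partition) (hdom : Dominates lam mu)
    (P : Finpartition (Finset.univ : Finset V))
    (hP : IsStablePartition G P) (hPtype : typeOf P = lam.parts) :
    ∃ Q : Finpartition (Finset.univ : Finset V),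
      IsStablePartition G Q ∧ typeOf Q = mu.parts := by
  obtain ⟨c, hc, hX⟩ := hG _ le_rfl
  have hlam := (coeff_weight_csf_pos_iff le_rfl lam).2 ⟨P, hP, hPtype⟩
  rw [hX] at hlam
  refine (coeff_weight_csf_pos_iff le_rfl mu).1 ?_
  rw [hX]
  refine coeff_sum_smul_pos_of_imp hc (fun ν => coeff_schurShape_nonneg _ _) (fun ν hν => ?_) hlam
  rw [coeff_weight_schur_pos_iff le_rfl] at hν ⊢
  exact hν.trans hdom
end
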